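/- Let Z ⊆ ℝ^d be a zonotope with generator set 𝒢 all of whose extreme points lie in {0,1/2,1}^d, and suppose 𝒢 itself is minimally linearly dependent, with |𝒢| = n. Then Z coincides, up to an affine bijective transformation, with the graphical zonotope Z(C_n) of the cycle on n vertices: there exists an affine map T : ℝ^n → ℝ^d that is injective on Z(C_n) and satisfies T(Z(C_n)) = Z. -/

import Mathlib

open Set Pointwise

noncomputable section

/-- `Z` is a zonotope with generator set `G`: `Z = t + Σ_{g ∈ G} conv{0,g}` for some
translation `t`, where the generators are nonzero and pairwise non-collinear. -/
def IsZonotopeWithGenerators {d : ℕ} (Z : Set (Fin d → ℝ)) (G : Finset (Fin d → ℝ)) : Prop :=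
  (∀ g ∈ G, g ≠ 0) ∧
  (∀ g ∈ G, ∀ h ∈ G, g ≠ h → ∀ r : ℝ, g ≠ r • h) ∧
  ∃ t : Fin d → ℝ,
    Z = {x | ∃ c : (Fin d → ℝ) → ℝ, (∀ g, 0 ≤ c g ∧ c g ≤ 1) ∧ x = t + ∑ g ∈ G, c g • g}

/-- A set is half-integral when all of its extreme points have coordinates in `{0,1/2,1}`. -/
def IsHalfIntegral {d : ℕ} (P : Set (Fin d → ℝ)) : Prop :=
  ∀ x ∈ Set.extremePoints ℝ P, ∀ i, x i = 0 ∨ x i = 1/2 ∨ x i = 1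

/-- A finite set of vectors is minimally linearly dependent when it is linearly dependent
but every proper subset of it is linearly independent. -/
def MinLinDep {d : ℕ} (A : Finset (Fin d → ℝ)) : Prop :=
  ¬ LinearIndependent ℝ (fun x : (A : Set (Fin d → ℝ)) => x.val) ∧
  ∀ B : Finset (Fin d → ℝ), B ⊂ A →
    LinearIndependent ℝ (fun x : (B : Set (Fin d → ℝ)) => x.val)

/-- The cyclic successor on `Fin n`. -/
def cycNext {n : ℕ} (i : Fin n) : Fin n :=
  if h : i.val + 1 < n then ⟨i.val + 1, h⟩ else ⟨0, i.pos⟩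

/-- The graphical zonotope of the cycle on `n` vertices: the Minkowski sum of the
segments `conv{e_i, e_{i+1}}` for `1 ≤ i ≤ n-1` together with `conv{e_n, e_1}`. -/
noncomputable def cycleZonotope (n : ℕ) : Set (Fin n → ℝ) :=
  ∑ i : Fin n, segment ℝ (Pi.single i (1 : ℝ)) (Pi.single (cycNext i) (1 : ℝ))

/-!
Each generator `g` is the difference of two adjacent vertices of `Z`, so its nonzero
coordinates have absolute value at least `1/2`, while the width `∑_g |g_j|` of `Z` in the
direction `e_j` is at most `1`. Minimality makes every coefficient of the dependence
`∑ c_g g = 0` nonzero, so each coordinate is nonzero on no generator or on exactly two, with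
equal absolute values `1/2`. Hence `∑ sign(c_g) g = 0` as well. Listing the signed generators
`w_i = sign(c_i) g_i` in a cyclic order, their partial sums `a_i` close up, and the linear map
`e_i ↦ a_i` sends the edges `e_{i+1} - e_i` of `Z(C_n)` to the `w_i`. It is injective on
`Z(C_n)` because the only linear relations among the `w_i`, like those among the
`e_{i+1} - e_i`, are the multiples of their sum.
-/

section GenericFunctional

variable {E ι : Type*} [AddCommGroup E] [Module ℝ E] [Finite ι] {v : ι → E}

theorem exists_dual_forall_ne_zero (hv : ∀ i, v i ≠ 0) :
    ∃ μ : Module.Dual ℝ E, ∀ i, μ (v i) ≠ 0 := by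
  by_contra! h
  obtain ⟨i, hi⟩ := Subspace.exists_eq_top_of_iUnion_eq_univ
    (p := fun i => LinearMap.ker (Module.Dual.eval ℝ E (v i)))
    (eq_univ_of_forall fun μ => mem_iUnion.2 (h μ))
  exact hv i <| (Module.forall_dual_apply_eq_zero_iff ℝ (v i)).1 fun μ =>
    LinearMap.mem_ker.1 (hi ▸ Submodule.mem_top : μ ∈ LinearMap.ker (Module.Dual.eval ℝ E (v i)))

theorem exists_dual_eq_zero_forall_ne_zero {x : E} (hv : ∀ i, v i ∉ ℝ ∙ x) :
    ∃ μ : Module.Dual ℝ E, μ x = 0 ∧ ∀ i, μ (v i) ≠ 0 := by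
  obtain ⟨μ, hμ⟩ := exists_dual_forall_ne_zero (v := fun i => (ℝ ∙ x).mkQ (v i))
    (by simpa [Submodule.Quotient.mk_eq_zero] using hv)
  exact ⟨μ ∘ₗ (ℝ ∙ x).mkQ, by
    simp [(Submodule.Quotient.mk_eq_zero _).2 (Submodule.mem_span_singleton_self x)], hμ⟩

open Filter Topology in
theorem exists_dual_pos_iff_lex (φ ψ : Module.Dual ℝ E) (hψ : ∀ i, φ (v i) = 0 → ψ (v i) ≠ 0) :
    ∃ ℓ : Module.Dual ℝ E, ∀ i, ℓ (v i) ≠ 0 ∧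
      (0 < ℓ (v i) ↔ 0 < φ (v i) ∨ φ (v i) = 0 ∧ 0 < ψ (v i)) := by
  have key : ∀ i, ∀ᶠ δ in 𝓝[>] (0 : ℝ), (φ + δ • ψ) (v i) ≠ 0 ∧
      (0 < (φ + δ • ψ) (v i) ↔ 0 < φ (v i) ∨ φ (v i) = 0 ∧ 0 < ψ (v i)) := by
    intro i
    have hlim : Tendsto (fun δ : ℝ => φ (v i) + δ * ψ (v i)) (𝓝[>] 0) (𝓝 (φ (v i))) := by
      refine tendsto_nhdsWithin_of_tendsto_nhds ?_
      simpa using ((continuous_id.mul continuous_const).const_add (φ (v i))).tendsto (0 : ℝ)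
    simp only [LinearMap.add_apply, LinearMap.smul_apply, smul_eq_mul]
    rcases lt_trichotomy (φ (v i)) 0 with h | h | h
    · filter_upwards [hlim.eventually (gt_mem_nhds h)] with δ hδ
      exact ⟨hδ.ne, by simp [hδ.not_gt, h.not_gt, h.ne]⟩
    · filter_upwards [self_mem_nhdsWithin] with δ (hδ : 0 < δ)
      simp [h, hδ, hδ.ne', hψ i h]
    · filter_upwards [hlim.eventually (lt_mem_nhds h)] with δ hδ
      exact ⟨hδ.ne', by simp [hδ, h]⟩
  obtain ⟨δ, hδ⟩ := (eventually_all.2 key).exists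
  exact ⟨φ + δ • ψ, hδ⟩

end GenericFunctional

theorem mem_extremePoints_of_forall_lt {E : Type*} [AddCommGroup E] [Module ℝ E] {A : Set E}
    {x : E} (ℓ : Module.Dual ℝ E) (hx : x ∈ A) (hlt : ∀ y ∈ A, y ≠ x → ℓ y < ℓ x) :
    x ∈ A.extremePoints ℝ := by
  have hle : ∀ y ∈ A, ℓ y ≤ ℓ x := fun y hy =>
    (eq_or_ne y x).elim (fun h => h ▸ le_rfl) fun h => (hlt y hy h).le
  refine mem_extremePoints.2 ⟨hx, fun y hy z hz ⟨a, b, ha, hb, hab, hxyz⟩ => ?_⟩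
  have hℓx : a * ℓ y + b * ℓ z = ℓ x := by rw [← hxyz]; simp
  have hℓx' : a * ℓ x + b * ℓ x = ℓ x := by rw [← add_mul, hab, one_mul]
  by_contra! h
  by_cases hyx : y = x
  · nlinarith [mul_lt_mul_of_pos_left (hlt z hz (h hyx)) hb,
      mul_le_mul_of_nonneg_left (hle y hy) ha.le]
  · nlinarith [mul_lt_mul_of_pos_left (hlt y hy hyx) ha,
      mul_le_mul_of_nonneg_left (hle z hz) hb.le]

section Zonotope

variable {E ι : Type*} [AddCommGroup E] [Module ℝ E] [Fintype ι]

def zonotope (t : E) (v : ι → E) : Set E :=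
  {x | ∃ c : ι → ℝ, (∀ i, c i ∈ Icc 0 1) ∧ x = t + ∑ i, c i • v i}

variable {t : E} {v : ι → E}

theorem add_sum_filter_pos_mem_extremePoints {ℓ : Module.Dual ℝ E} (hℓ : ∀ i, ℓ (v i) ≠ 0) :
    t + ∑ i with 0 < ℓ (v i), v i ∈ (zonotope t v).extremePoints ℝ := by
  classical
  set χ : ι → ℝ := fun i => if 0 < ℓ (v i) then 1 else 0
  have hχ : ∑ i with 0 < ℓ (v i), v i = ∑ i, χ i • v i := by
    simp [χ, Finset.sum_filter, ite_smul]
  refine mem_extremePoints_of_forall_lt ℓ ⟨χ, fun i => ?_, by rw [hχ]⟩ ?_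
  · by_cases h : 0 < ℓ (v i) <;> simp [χ, h]
  rintro _ ⟨c, hc, rfl⟩ hne
  have hterm : ∀ i, c i * ℓ (v i) ≤ χ i * ℓ (v i) := fun i => by
    have := hc i
    rcases (hℓ i).lt_or_gt with h | h <;> simp only [χ, h, h.not_gt, if_true, if_false] <;>
      nlinarith [this.1, this.2]
  obtain ⟨i, hi⟩ : ∃ i, c i ≠ χ i := by
    by_contra! h
    exact hne (by rw [hχ]; simp [h])
  have hstrict : c i * ℓ (v i) < χ i * ℓ (v i) :=
    (hterm i).lt_of_ne fun h => hi (mul_right_cancel₀ (hℓ i) h)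
  simpa [hχ, map_sum] using Finset.sum_lt_sum (fun i _ => hterm i) ⟨i, Finset.mem_univ i, hstrict⟩

theorem exists_mem_extremePoints_sub_eq (i₀ : ι) (hv : v i₀ ≠ 0)
    (hnc : ∀ i ≠ i₀, v i ∉ ℝ ∙ v i₀) :
    ∃ x ∈ (zonotope t v).extremePoints ℝ, ∃ y ∈ (zonotope t v).extremePoints ℝ, x - y = v i₀ := by
  classical
  obtain ⟨μ, hμ₀, hμ⟩ := exists_dual_eq_zero_forall_ne_zero (v := fun i : {i // i ≠ i₀} => v i)
    fun i => hnc i i.2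
  obtain ⟨ν, hν⟩ := exists_dual_forall_ne_zero (v := fun _ : Unit => v i₀) fun _ => hv
  have hψ (ψ : Module.Dual ℝ E) (hψ₀ : ψ (v i₀) ≠ 0) (i : ι) : μ (v i) = 0 → ψ (v i) ≠ 0 := by
    rcases eq_or_ne i i₀ with rfl | hi
    · exact fun _ => hψ₀
    · exact fun h => absurd h (hμ ⟨i, hi⟩)
  -- `μ` vanishes exactly at `v i₀`; perturbing it by `±ν₁` gives the two ends of an edge
  -- parallel to `v i₀`
  set ν₁ := (ν (v i₀))⁻¹ • ν
  have hν₁ : ν₁ (v i₀) = 1 := by simp [ν₁, hν ()]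
  obtain ⟨ℓ₁, hℓ₁⟩ := exists_dual_pos_iff_lex μ ν₁ (hψ ν₁ (by simp [hν₁]))
  obtain ⟨ℓ₂, hℓ₂⟩ := exists_dual_pos_iff_lex μ (-ν₁) (hψ (-ν₁) (by simp [hν₁]))
  have hsplit : Finset.univ.filter (fun i => 0 < ℓ₁ (v i)) =
      insert i₀ (Finset.univ.filter fun i => 0 < ℓ₂ (v i)) := by
    ext i
    rcases eq_or_ne i i₀ with rfl | hi
    · simp [(hℓ₁ i).2, hμ₀, hν₁]
    · simp [(hℓ₁ i).2, (hℓ₂ i).2, hi, hμ ⟨i, hi⟩]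
  refine ⟨_, add_sum_filter_pos_mem_extremePoints fun i => (hℓ₁ i).1,
    _, add_sum_filter_pos_mem_extremePoints fun i => (hℓ₂ i).1, ?_⟩
  rw [hsplit, Finset.sum_insert (by simp [(hℓ₂ i₀).2, hμ₀, hν₁])]
  abel

theorem exists_mem_extremePoints_map_sub_eq_sum_abs (hv : ∀ i, v i ≠ 0) (φ : Module.Dual ℝ E) :
    ∃ x ∈ (zonotope t v).extremePoints ℝ, ∃ y ∈ (zonotope t v).extremePoints ℝ,
      φ (x - y) = ∑ i, |φ (v i)| := by
  obtain ⟨ψ, hψ⟩ := exists_dual_forall_ne_zero hv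
  obtain ⟨ℓ₁, hℓ₁⟩ := exists_dual_pos_iff_lex φ ψ fun i _ => hψ i
  obtain ⟨ℓ₂, hℓ₂⟩ := exists_dual_pos_iff_lex (-φ) ψ fun i _ => hψ i
  refine ⟨_, add_sum_filter_pos_mem_extremePoints fun i => (hℓ₁ i).1,
    _, add_sum_filter_pos_mem_extremePoints fun i => (hℓ₂ i).1, ?_⟩
  simp only [add_sub_add_left_eq_sub, map_sub, map_sum, Finset.sum_filter, ← Finset.sum_sub_distrib]
  refine Finset.sum_congr rfl fun i _ => ?_
  simp only [apply_ite φ, map_zero, (hℓ₁ i).2, (hℓ₂ i).2, LinearMap.neg_apply]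
  rcases lt_trichotomy (φ (v i)) 0 with h | h | h
  · simp [h, h.ne, h.not_gt, abs_of_neg h]
  · simp [h]
  · simp [h, h.ne', h.not_gt, abs_of_pos h]

end Zonotope

theorem half_le_abs_sub_of_mem {a b : ℝ} (ha : a = 0 ∨ a = 1/2 ∨ a = 1)
    (hb : b = 0 ∨ b = 1/2 ∨ b = 1) (hab : a ≠ b) : 1/2 ≤ |a - b| := by
  rcases ha with rfl | rfl | rfl <;> rcases hb with rfl | rfl | rfl <;>
    first | exact absurd rfl hab | norm_num

theorem abs_sub_le_one_of_mem {a b : ℝ} (ha : a = 0 ∨ a = 1/2 ∨ a = 1)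
    (hb : b = 0 ∨ b = 1/2 ∨ b = 1) : |a - b| ≤ 1 := by
  rcases ha with rfl | rfl | rfl <;> rcases hb with rfl | rfl | rfl <;> norm_num

section HalfIntegral

variable {d : ℕ} {ι : Type*} [Fintype ι] {t : Fin d → ℝ} {v : ι → Fin d → ℝ}

theorem IsHalfIntegral.half_le_abs_apply (hZ : IsHalfIntegral (zonotope t v))
    {i : ι} (hv : v i ≠ 0) (hnc : ∀ k ≠ i, v k ∉ ℝ ∙ v i) {j : Fin d} (hj : v i j ≠ 0) :
    1/2 ≤ |v i j| := by
  obtain ⟨x, hx, y, hy, hxy⟩ := exists_mem_extremePoints_sub_eq (t := t) i hv hnc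
  rw [← hxy] at hj ⊢
  exact half_le_abs_sub_of_mem (hZ x hx j) (hZ y hy j) (sub_ne_zero.1 hj)

theorem IsHalfIntegral.sum_abs_apply_le_one (hZ : IsHalfIntegral (zonotope t v))
    (hv : ∀ i, v i ≠ 0) (j : Fin d) : ∑ i, |v i j| ≤ 1 := by
  obtain ⟨x, hx, y, hy, hxy⟩ := exists_mem_extremePoints_map_sub_eq_sum_abs (t := t) hv
    (LinearMap.proj j)
  simp only [LinearMap.proj_apply, Pi.sub_apply] at hxy
  exact hxy ▸ (le_abs_self _).trans (abs_sub_le_one_of_mem (hZ x hx j) (hZ y hy j))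

end HalfIntegral

section Circuit

variable {E ι : Type*} [AddCommGroup E] [Module ℝ E] [Fintype ι] {v : ι → E}

theorem eq_zero_of_sum_smul_eq_zero (hmin : ∀ i, LinearIndepOn ℝ v {i}ᶜ) {c : ι → ℝ}
    (hc : ∑ i, c i • v i = 0) {i₀ : ι} (h₀ : c i₀ = 0) (i : ι) : c i = 0 := by
  classical
  rcases eq_or_ne i i₀ with rfl | hi
  · exact h₀
  have hind : LinearIndepOn ℝ v (({i₀}ᶜ : Finset ι) : Set ι) := by simpa using hmin i₀
  rw [Fintype.sum_eq_add_sum_compl i₀, h₀, zero_smul, zero_add] at hc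
  exact linearIndepOn_finset_iff.1 hind c hc i (by simpa using hi)

theorem exists_sum_smul_eq_zero_forall_ne_zero (hdep : ¬ LinearIndependent ℝ v)
    (hmin : ∀ i, LinearIndepOn ℝ v {i}ᶜ) :
    ∃ c : ι → ℝ, (∀ i, c i ≠ 0) ∧ ∑ i, c i • v i = 0 := by
  obtain ⟨c, hc, i, hi⟩ := Fintype.not_linearIndependent_iff.1 hdep
  exact ⟨c, fun _ h => hi (eq_zero_of_sum_smul_eq_zero hmin hc h i), hc⟩

theorem exists_forall_eq_of_sum_smul_smul_eq_zero (hmin : ∀ i, LinearIndepOn ℝ v {i}ᶜ)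
    {ε : ι → ℝ} (hε0 : ∀ i, ε i ≠ 0) (hε : ∑ i, ε i • v i = 0) {c : ι → ℝ}
    (hc : ∑ i, c i • ε i • v i = 0) : ∃ r, ∀ i, c i = r := by
  cases isEmpty_or_nonempty ι with
  | inl _ => exact ⟨0, isEmptyElim⟩
  | inr h =>
    obtain ⟨i₀⟩ := h
    have hsum : ∑ i, ((c i - c i₀) * ε i) • v i = 0 := by
      simp only [sub_mul, sub_smul, mul_smul, Finset.sum_sub_distrib, hc, ← Finset.smul_sum, hε,
        smul_zero, sub_zero]
    have hzero := eq_zero_of_sum_smul_eq_zero hmin hsum (i₀ := i₀) (by simp)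
    exact ⟨c i₀, fun i => sub_eq_zero.1 ((mul_eq_zero.1 (hzero i)).resolve_right (hε0 i))⟩

end Circuit

theorem Real.sign_mul_add_sign_mul_eq_zero {a b x y : ℝ} (h : a * x + b * y = 0)
    (hxy : |x| = |y|) : Real.sign a * x + Real.sign b * y = 0 := by
  rcases abs_eq_abs.1 hxy with rfl | rfl
  · rcases eq_or_ne x 0 with rfl | hx
    · simp
    · have hab : a + b = 0 := (mul_eq_zero.1 (by linarith : (a + b) * x = 0)).resolve_right hx
      rw [eq_neg_of_add_eq_zero_right hab, Real.sign_neg]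
      ring
  · rcases eq_or_ne y 0 with rfl | hy
    · simp
    · rw [show a = b from mul_right_cancel₀ hy (by linarith : a * y = b * y)]
      ring

theorem Fintype.sum_sign_mul_eq_zero {ι : Type*} [Fintype ι] {c x : ι → ℝ}
    (hhalf : ∀ i, x i ≠ 0 → 1/2 ≤ |x i|) (hsum : ∑ i, |x i| ≤ 1) (hc : ∑ i, c i * x i = 0) :
    ∑ i, Real.sign (c i) * x i = 0 := by
  classical
  by_cases hall : ∀ i, x i = 0
  · simp [hall]
  push Not at hall
  obtain ⟨a, ha⟩ := hall
  by_cases hpair : ∃ b ≠ a, x b ≠ 0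
  · obtain ⟨b, hba, hb⟩ := hpair
    have hrest : ∀ k, k ≠ a ∧ k ≠ b → x k = 0 := by
      rintro k ⟨hka, hkb⟩
      by_contra hk
      have := Finset.sum_le_sum_of_subset_of_nonneg (Finset.subset_univ {a, b, k})
        fun i _ _ => abs_nonneg (x i)
      rw [Finset.sum_insert (by simp [hba.symm, hka.symm]), Finset.sum_pair hkb.symm] at this
      linarith [hhalf a ha, hhalf b hb, hhalf k hk]
    have htwo (f : ι → ℝ) (hf : ∀ k, x k = 0 → f k = 0) : ∑ i, f i = f a + f b :=
      Finset.sum_eq_add_of_mem a b (Finset.mem_univ _) (Finset.mem_univ _) hba.symm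
        fun k _ hk => hf k (hrest k hk)
    have hab : |x a| = |x b| := by
      have := htwo (fun i => |x i|) (by simp +contextual)
      linarith [hhalf a ha, hhalf b hb]
    rw [htwo _ (by simp +contextual)] at hc ⊢
    exact Real.sign_mul_add_sign_mul_eq_zero hc hab
  · push Not at hpair
    have hone (f : ι → ℝ) (hf : ∀ k, x k = 0 → f k = 0) : ∑ i, f i = f a :=
      Fintype.sum_eq_single a fun k hk => hf k (hpair k hk)
    rw [hone _ (by simp +contextual)] at hc ⊢
    simp [(mul_eq_zero.1 hc).resolve_right ha]

theorem sum_sign_smul_eq_zero {ι : Type*} [Fintype ι] {d : ℕ} {v : ι → Fin d → ℝ} {c : ι → ℝ}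
    (hhalf : ∀ i j, v i j ≠ 0 → 1/2 ≤ |v i j|) (hsum : ∀ j, ∑ i, |v i j| ≤ 1)
    (hc : ∑ i, c i • v i = 0) : ∑ i, Real.sign (c i) • v i = 0 := by
  ext j
  have hcj := congrFun hc j
  simp only [Finset.sum_apply, Pi.smul_apply, smul_eq_mul, Pi.zero_apply] at hcj ⊢
  exact Fintype.sum_sign_mul_eq_zero (fun i => hhalf i j) (hsum j) hcj

section Affine

variable {E F ι : Type*} [AddCommGroup E] [Module ℝ E] [AddCommGroup F] [Module ℝ F] [Fintype ι]

theorem sum_segment_eq_zonotope (a b : ι → E) :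
    ∑ i, segment ℝ (a i) (b i) = zonotope (∑ i, a i) (fun i => b i - a i) := by
  ext x
  simp only [Set.mem_fintype_sum, segment_eq_image', mem_image, zonotope, mem_ofPred_eq]
  constructor
  · rintro ⟨y, hy, rfl⟩
    choose c hc hcy using hy
    exact ⟨c, hc, by simp [← hcy, Finset.sum_add_distrib]⟩
  · rintro ⟨c, hc, rfl⟩
    exact ⟨_, fun i => ⟨c i, hc i, rfl⟩, by simp [Finset.sum_add_distrib]⟩

theorem exists_zonotope_smul_eq (t : E) (v : ι → E) {ε : ι → ℝ} (hε : ∀ i, ε i = 1 ∨ ε i = -1) :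
    ∃ s, zonotope s (fun i => ε i • v i) = zonotope t v := by
  -- reflecting the `i`-th parameter `c ↦ 1 - c` wherever `ε i = -1`
  let σ : (ι → ℝ) → ι → ℝ := fun c i => (1 - ε i) / 2 + ε i * c i
  have hσσ (c : ι → ℝ) : σ (σ c) = c := by
    ext i; rcases hε i with h | h <;> simp [σ, h]
  have hσ (c : ι → ℝ) (hc : ∀ i, c i ∈ Icc 0 1) (i : ι) : σ c i ∈ Icc 0 1 := by
    have := hc i; rcases hε i with h | h <;> simp only [σ, h, mem_Icc] at this ⊢ <;>
      constructor <;> linarith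
  have hsum (c : ι → ℝ) :
      t + ∑ i, c i • v i = (t + ∑ i, ((1 - ε i) / 2) • v i) + ∑ i, σ c i • ε i • v i := by
    rw [add_assoc, ← Finset.sum_add_distrib]
    congr 1
    refine Finset.sum_congr rfl fun i _ => ?_
    rcases hε i with h | h <;> simp only [σ, h] <;> module
  refine ⟨t + ∑ i, ((1 - ε i) / 2) • v i, Set.ext fun x => ⟨?_, ?_⟩⟩
  · rintro ⟨c, hc, rfl⟩
    exact ⟨σ c, hσ c hc, by rw [hsum (σ c), hσσ]⟩
  · rintro ⟨c, hc, rfl⟩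
    exact ⟨σ c, hσ c hc, hsum c⟩

variable {t : E} {v : ι → E}

theorem AffineMap.image_zonotope (T : E →ᵃ[ℝ] F) :
    T '' zonotope t v = zonotope (T t) (fun i => T.linear (v i)) := by
  have hT (c : ι → ℝ) : T (t + ∑ i, c i • v i) = T t + ∑ i, c i • T.linear (v i) := by
    rw [add_comm, ← vadd_eq_add, T.map_vadd, vadd_eq_add, add_comm, map_sum]
    simp
  ext x
  constructor
  · rintro ⟨_, ⟨c, hc, rfl⟩, rfl⟩
    exact ⟨c, hc, hT c⟩
  · rintro ⟨c, hc, rfl⟩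
    exact ⟨_, ⟨c, hc, rfl⟩, hT c⟩

theorem AffineMap.injOn_zonotope (T : E →ᵃ[ℝ] F)
    (h : ∀ c : ι → ℝ, T.linear (∑ i, c i • v i) = 0 → ∑ i, c i • v i = 0) :
    InjOn T (zonotope t v) := by
  rintro _ ⟨c, -, rfl⟩ _ ⟨c', -, rfl⟩ hTcc'
  have hdiff : (t + ∑ i, c i • v i) - (t + ∑ i, c' i • v i) = ∑ i, (c - c') i • v i := by
    simp [sub_smul, Finset.sum_sub_distrib]
  rw [← sub_eq_zero, hdiff]
  apply h
  rw [← hdiff, ← vsub_eq_sub, T.linearMap_vsub, hTcc', vsub_self]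

end Affine

section Cycle

variable {n : ℕ}

theorem cycNext_eq_finRotate (i : Fin n) : cycNext i = finRotate n i := by
  cases n with
  | zero => exact i.elim0
  | succ m =>
    ext
    rw [coe_finRotate, cycNext]
    split_ifs <;> simp_all [Fin.ext_iff]; omega

theorem sum_single_cycNext_sub_single :
    ∑ i : Fin n, (Pi.single (cycNext i) (1 : ℝ) - Pi.single i 1 : Fin n → ℝ) = 0 := by
  simp only [Finset.sum_sub_distrib, cycNext_eq_finRotate,
    Equiv.sum_comp (finRotate n) fun i => (Pi.single i (1 : ℝ) : Fin n → ℝ), sub_self]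

theorem exists_cycNext_sub_eq {E : Type*} [AddCommGroup E] {w : Fin n → E} (hw : ∑ i, w i = 0) :
    ∃ a : Fin n → E, ∀ i, a (cycNext i) - a i = w i := by
  refine ⟨fun i => ∑ k with k < i, w k, fun i => ?_⟩
  simp only [cycNext]
  split_ifs with h
  · have : (Finset.univ.filter fun k : Fin n => k < ⟨i + 1, h⟩) =
        insert i (Finset.univ.filter (· < i)) := by
      ext k
      simp only [Finset.mem_filter, Finset.mem_univ, true_and, Finset.mem_insert, Fin.lt_def,
        Fin.ext_iff]
      omega
    rw [this, Finset.sum_insert (by simp)]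
    abel
  · have : (Finset.univ.filter (· < i)) = Finset.univ.erase i := by
      ext k
      simp only [Finset.mem_filter, Finset.mem_univ, true_and, Finset.mem_erase, Fin.lt_def,
        ne_eq, Fin.ext_iff, and_true]
      omega
    rw [← Finset.sum_erase_add _ _ (Finset.mem_univ i), ← this] at hw
    have : (Finset.univ.filter fun k : Fin n => k < ⟨0, i.pos⟩) = ∅ := by
      ext k; simp [Fin.lt_def]
    rw [this, Finset.sum_empty, zero_sub, neg_eq_iff_add_eq_zero, hw]

theorem exists_affineMap_image_cycleZonotope {E : Type*} [AddCommGroup E] [Module ℝ E]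
    {w : Fin n → E} (hw : ∑ i, w i = 0)
    (hker : ∀ c : Fin n → ℝ, ∑ i, c i • w i = 0 → ∃ r, ∀ i, c i = r) (s : E) :
    ∃ T : (Fin n → ℝ) →ᵃ[ℝ] E, InjOn T (cycleZonotope n) ∧ T '' cycleZonotope n = zonotope s w := by
  obtain ⟨a, ha⟩ := exists_cycNext_sub_eq hw
  set L := Fintype.linearCombination ℝ a
  set u : Fin n → Fin n → ℝ := fun i => Pi.single (cycNext i) 1 - Pi.single i 1
  have hLu (i : Fin n) : L (u i) = w i := by simp [u, L, ha]
  have hcyc : cycleZonotope n = zonotope 1 u := by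
    rw [cycleZonotope, sum_segment_eq_zonotope]
    simpa using congrArg (zonotope · u) (Finset.univ_sum_single (1 : Fin n → ℝ))
  set T : (Fin n → ℝ) →ᵃ[ℝ] E := L.toAffineMap + AffineMap.const ℝ _ (s - L 1)
  have hT : T.linear = L := by simp [T]
  refine ⟨T, ?_, ?_⟩
  · rw [hcyc]
    refine T.injOn_zonotope fun c hc => ?_
    simp only [hT, map_sum, map_smul, hLu] at hc
    obtain ⟨r, hr⟩ := hker c hc
    simp only [hr, ← Finset.smul_sum, u, sum_single_cycNext_sub_single, smul_zero]
  · rw [hcyc, T.image_zonotope, hT]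
    simp [T, hLu]

end Cycle

section Generators

variable {d : ℕ} {ι : Type*} {G : Finset (Fin d → ℝ)}

theorem IsZonotopeWithGenerators.exists_eq_zonotope [Fintype ι] {Z : Set (Fin d → ℝ)}
    (hZ : IsZonotopeWithGenerators Z G) (e : ι ≃ G) :
    (∀ i, (e i : Fin d → ℝ) ≠ 0) ∧ (∀ i, ∀ k ≠ i, (e k : Fin d → ℝ) ∉ ℝ ∙ (e i : Fin d → ℝ)) ∧
      ∃ t, Z = zonotope t fun i => (e i : Fin d → ℝ) := by
  obtain ⟨hne, hnc, t, rfl⟩ := hZ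
  refine ⟨fun i => hne _ (e i).2, fun i k hki hk => ?_, t, ?_⟩
  · obtain ⟨r, hr⟩ := Submodule.mem_span_singleton.1 hk
    exact hnc _ (e k).2 _ (e i).2 (fun h => hki (e.injective (Subtype.ext h))) r hr.symm
  have hsum (c : (Fin d → ℝ) → ℝ) : ∑ g ∈ G, c g • g = ∑ i, c (e i) • (e i : Fin d → ℝ) := by
    rw [← Finset.sum_coe_sort G, ← e.sum_comp]
  ext x
  constructor
  · rintro ⟨c, hc, rfl⟩
    exact ⟨fun i => c (e i), fun i => hc _, by rw [hsum]⟩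
  · rintro ⟨c, hc, rfl⟩
    refine ⟨fun g => if h : g ∈ G then c (e.symm ⟨g, h⟩) else 0, fun g => ?_, by rw [hsum]; simp⟩
    dsimp only
    split_ifs
    exacts [hc _, ⟨le_rfl, zero_le_one⟩]

theorem MinLinDep.not_linearIndependent (hG : MinLinDep G) (e : ι ≃ G) :
    ¬ LinearIndependent ℝ fun i => (e i : Fin d → ℝ) :=
  fun h => hG.1 ((linearIndependent_equiv e).1 h)

theorem MinLinDep.linearIndepOn_compl (hG : MinLinDep G) (e : ι ≃ G) (i : ι) :
    LinearIndepOn ℝ (fun i => (e i : Fin d → ℝ)) {i}ᶜ := by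
  have himage : (fun k => (e k : Fin d → ℝ)) '' {i}ᶜ = ↑(G.erase (e i)) := by
    ext x
    simp only [mem_image, mem_compl_iff, mem_singleton_iff, Finset.coe_erase, Set.mem_sdiff,
      Finset.mem_coe]
    constructor
    · rintro ⟨k, hk, rfl⟩
      exact ⟨(e k).2, fun h => hk (e.injective (Subtype.ext h))⟩
    · rintro ⟨hxG, hx⟩
      exact ⟨e.symm ⟨x, hxG⟩, fun h => hx (by rw [← h]; simp), by simp⟩
  rw [linearIndepOn_iff_image (f := fun k => (e k : Fin d → ℝ))
    (Subtype.val_injective.comp e.injective).injOn, himage]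
  exact hG.2 _ (Finset.erase_ssubset (e i).2)

end Generators

/-- If the whole generator set `𝒢` of a half-integral zonotope `Z`, of cardinality `n`,
is minimally linearly dependent, then `Z` coincides, up to an affine bijective
transformation, with the graphical zonotope of the cycle on `n` vertices. -/
theorem halfIntegral_zonotope_minLinDep_is_cycle {d : ℕ} (Z : Set (Fin d → ℝ))
    (G : Finset (Fin d → ℝ)) (hZ : IsZonotopeWithGenerators Z G)
    (hHI : IsHalfIntegral Z) (hG : MinLinDep G) (n : ℕ) (hn : G.card = n) :
    ∃ T : (Fin n → ℝ) →ᵃ[ℝ] (Fin d → ℝ),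
      Set.InjOn T (cycleZonotope n) ∧ T '' cycleZonotope n = Z := by
  set e := (G.equivFinOfCardEq hn).symm
  set v : Fin n → Fin d → ℝ := fun i => e i
  obtain ⟨hv0, hvnc, t, rfl⟩ := hZ.exists_eq_zonotope e
  have hmin := hG.linearIndepOn_compl e
  obtain ⟨c, hc0, hc⟩ := exists_sum_smul_eq_zero_forall_ne_zero (hG.not_linearIndependent e) hmin
  have hsign : ∑ i, Real.sign (c i) • v i = 0 := sum_sign_smul_eq_zero
    (fun i _ => hHI.half_le_abs_apply (hv0 i) (hvnc i)) (hHI.sum_abs_apply_le_one hv0) hc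
  obtain ⟨s, hs⟩ := exists_zonotope_smul_eq t v (ε := fun i => Real.sign (c i))
    fun i => (Real.sign_apply_eq_of_ne_zero _ (hc0 i)).symm
  rw [← hs]
  refine exists_affineMap_image_cycleZonotope hsign (fun c' => ?_) s
  exact exists_forall_eq_of_sum_smul_smul_eq_zero hmin (fun i => mt Real.sign_eq_zero_iff.1 (hc0 i))
    hsign
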